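/- (Corollary, no butterfly spread arbitrage.) Let ω : ℝ → (0, ∞) be twice differentiable and suppose that for every κ ∈ ℝ both Φ(z₊(κ)) + φ(z₊(κ)) ω'(κ) ≥ 0 and ξ^ω(κ) := (1 − (κ/ω(κ)) ω'(κ))² − (1/4)(ω(κ) ω'(κ))² + ω(κ) ω''(κ) ≥ 0 hold, where z₊(κ) = (κ + ω(κ)²/2)/ω(κ). Then the put price slice P(κ) = exp κ · Φ(z₊(κ)) − Φ(z₋(κ)), with z₋(κ) = (κ − ω(κ)²/2)/ω(κ), is convex on ℝ. -/

import Mathlib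

open MeasureTheory Real

/-- Standard normal probability density function. -/
noncomputable def stdNormalPDF (z : ℝ) : ℝ := Real.exp (-z ^ 2 / 2) / Real.sqrt (2 * Real.pi)

/-- Standard normal cumulative distribution function. -/
noncomputable def stdNormalCDF (z : ℝ) : ℝ := ∫ u in Set.Iic z, stdNormalPDF u

/-!
Differentiating `P`, the identity `φ(z₋) = e^κ φ(z₊)` cancels the two density terms, leaving
`P' = e^κ (Φ(z₊) + φ(z₊) ω')`, the quantity assumed nonnegative. Differentiating once more, the
density terms combine into the correction multiplier: `P'' = P' + e^κ φ(z₊) ξ^ω / ω ≥ 0`.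
-/

lemma stdNormalPDF_pos (z : ℝ) : 0 < stdNormalPDF z := by
  unfold stdNormalPDF
  positivity

lemma continuous_stdNormalPDF : Continuous stdNormalPDF := by
  unfold stdNormalPDF
  fun_prop

lemma stdNormalPDF_eq_gaussianPDFReal : stdNormalPDF = ProbabilityTheory.gaussianPDFReal 0 1 := by
  funext z
  simp [stdNormalPDF, ProbabilityTheory.gaussianPDFReal, div_eq_inv_mul]

lemma integrable_stdNormalPDF : Integrable stdNormalPDF := by
  rw [stdNormalPDF_eq_gaussianPDFReal]
  exact ProbabilityTheory.integrable_gaussianPDFReal 0 1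

lemma hasDerivAt_stdNormalCDF (z : ℝ) : HasDerivAt stdNormalCDF (stdNormalPDF z) z := by
  have hint := integrable_stdNormalPDF
  have hCDF : stdNormalCDF = fun z => stdNormalCDF 0 + ∫ u in (0 : ℝ)..z, stdNormalPDF u := by
    funext z
    rw [← intervalIntegral.integral_Iic_sub_Iic hint.integrableOn hint.integrableOn]
    unfold stdNormalCDF
    ring
  rw [hCDF]
  exact (intervalIntegral.integral_hasDerivAt_right hint.intervalIntegrable
    (continuous_stdNormalPDF.stronglyMeasurableAtFilter _ _)
    continuous_stdNormalPDF.continuousAt).const_add _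

lemma hasDerivAt_stdNormalPDF (z : ℝ) : HasDerivAt stdNormalPDF (-z * stdNormalPDF z) z := by
  have hexp : HasDerivAt (fun z : ℝ => exp (-z ^ 2 / 2)) (exp (-z ^ 2 / 2) * -z) z :=
    (((hasDerivAt_pow 2 z).neg.div_const 2).congr_deriv (by ring)).exp
  exact (hexp.div_const _).congr_deriv (by unfold stdNormalPDF; ring)

noncomputable def pivotPlus (ω : ℝ → ℝ) (κ : ℝ) : ℝ := (κ + ω κ ^ 2 / 2) / ω κ

noncomputable def pivotMinus (ω : ℝ → ℝ) (κ : ℝ) : ℝ := (κ - ω κ ^ 2 / 2) / ω κ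

noncomputable def putPrice (ω : ℝ → ℝ) (κ : ℝ) : ℝ :=
  exp κ * stdNormalCDF (pivotPlus ω κ) - stdNormalCDF (pivotMinus ω κ)

noncomputable def putPriceDeriv (ω ω' : ℝ → ℝ) (κ : ℝ) : ℝ :=
  exp κ * (stdNormalCDF (pivotPlus ω κ) + stdNormalPDF (pivotPlus ω κ) * ω' κ)

/-- `ξ^ω(κ)`, evaluated at `w = ω κ`, `w' = ω' κ`, `w'' = ω'' κ`. -/
noncomputable def correctionMultiplier (κ w w' w'' : ℝ) : ℝ :=
  (1 - (κ / w) * w') ^ 2 - (1 / 4) * (w * w') ^ 2 + w * w''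

lemma stdNormalPDF_pivotMinus (ω : ℝ → ℝ) {κ : ℝ} (hω : ω κ ≠ 0) :
    stdNormalPDF (pivotMinus ω κ) = exp κ * stdNormalPDF (pivotPlus ω κ) := by
  have hsq : pivotPlus ω κ ^ 2 - pivotMinus ω κ ^ 2 = 2 * κ := by
    unfold pivotPlus pivotMinus
    field_simp
    ring
  unfold stdNormalPDF
  rw [mul_div_assoc', ← exp_add]
  congr 2
  linarith

section Derivatives

variable {ω ω' : ℝ → ℝ} {κ w' w'' : ℝ}

lemma hasDerivAt_pivotPlus (hω : ω κ ≠ 0) (h : HasDerivAt ω w' κ) :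
    HasDerivAt (pivotPlus ω) ((1 - κ / ω κ * w') / ω κ + w' / 2) κ := by
  have hnum : HasDerivAt (fun κ => κ + ω κ ^ 2 / 2) (1 + ω κ * w') κ :=
    ((hasDerivAt_id κ).add ((h.pow 2).div_const 2)).congr_deriv (by simp; ring)
  exact (hnum.div h hω).congr_deriv (by field_simp; ring)

lemma hasDerivAt_pivotMinus (hω : ω κ ≠ 0) (h : HasDerivAt ω w' κ) :
    HasDerivAt (pivotMinus ω) ((1 - κ / ω κ * w') / ω κ - w' / 2) κ := by
  have hnum : HasDerivAt (fun κ => κ - ω κ ^ 2 / 2) (1 - ω κ * w') κ :=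
    ((hasDerivAt_id κ).sub ((h.pow 2).div_const 2)).congr_deriv (by simp; ring)
  exact (hnum.div h hω).congr_deriv (by field_simp; ring)

lemma hasDerivAt_putPrice (hω : ω κ ≠ 0) (h : HasDerivAt ω (ω' κ) κ) :
    HasDerivAt (putPrice ω) (putPriceDeriv ω ω' κ) κ := by
  have hplus := (hasDerivAt_stdNormalCDF _).comp κ (hasDerivAt_pivotPlus hω h)
  have hminus := (hasDerivAt_stdNormalCDF _).comp κ (hasDerivAt_pivotMinus hω h)
  refine (((hasDerivAt_exp κ).mul hplus).sub hminus).congr_deriv ?_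
  rw [Function.comp_apply, stdNormalPDF_pivotMinus ω hω, putPriceDeriv]
  ring

lemma hasDerivAt_putPriceDeriv (hω : ω κ ≠ 0) (h : HasDerivAt ω (ω' κ) κ)
    (h' : HasDerivAt ω' w'' κ) :
    HasDerivAt (putPriceDeriv ω ω') (putPriceDeriv ω ω' κ + exp κ *
      stdNormalPDF (pivotPlus ω κ) * correctionMultiplier κ (ω κ) (ω' κ) w'' / ω κ) κ := by
  have hz := hasDerivAt_pivotPlus hω h
  have hcdf := (hasDerivAt_stdNormalCDF _).comp κ hz
  have hpdf := (hasDerivAt_stdNormalPDF _).comp κ hz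
  have hξ : ((1 - κ / ω κ * ω' κ) / ω κ + ω' κ / 2) * (1 - pivotPlus ω κ * ω' κ) + w'' =
      correctionMultiplier κ (ω κ) (ω' κ) w'' / ω κ := by
    unfold pivotPlus correctionMultiplier
    field_simp
    ring
  refine ((hasDerivAt_exp κ).mul (hcdf.add (hpdf.mul h'))).congr_deriv ?_
  simp only [Pi.add_apply, Pi.mul_apply, Function.comp_apply]
  rw [putPriceDeriv, mul_div_assoc, ← hξ]
  ring

end Derivatives

lemma convexOn_univ_of_hasDerivAt2_nonneg {f f' f'' : ℝ → ℝ}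
    (hf : ∀ x, HasDerivAt f (f' x) x) (hf' : ∀ x, HasDerivAt f' (f'' x) x)
    (hf''₀ : ∀ x, 0 ≤ f'' x) : ConvexOn ℝ Set.univ f :=
  convexOn_of_hasDerivWithinAt2_nonneg convex_univ
    (fun x _ => (hf x).continuousAt.continuousWithinAt)
    (fun x _ => (hf x).hasDerivWithinAt) (fun x _ => (hf' x).hasDerivWithinAt)
    (fun x _ => hf''₀ x)

theorem no_butterfly_spread_arbitrage (ω ω' ω'' : ℝ → ℝ)
    (hpos : ∀ κ, 0 < ω κ)
    (hderiv : ∀ κ, HasDerivAt ω (ω' κ) κ)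
    (hderiv2 : ∀ κ, HasDerivAt ω' (ω'' κ) κ)
    (hvert : ∀ κ, 0 ≤ stdNormalCDF ((κ + ω κ ^ 2 / 2) / ω κ)
      + stdNormalPDF ((κ + ω κ ^ 2 / 2) / ω κ) * ω' κ)
    (hbfly : ∀ κ, 0 ≤ (1 - (κ / ω κ) * ω' κ) ^ 2 - (1 / 4) * (ω κ * ω' κ) ^ 2 + ω κ * ω'' κ) :
    ConvexOn ℝ Set.univ
      (fun κ => Real.exp κ * stdNormalCDF ((κ + ω κ ^ 2 / 2) / ω κ)
        - stdNormalCDF ((κ - ω κ ^ 2 / 2) / ω κ)) := by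
  have hω κ : ω κ ≠ 0 := (hpos κ).ne'
  refine convexOn_univ_of_hasDerivAt2_nonneg (f := putPrice ω)
    (fun κ => hasDerivAt_putPrice (hω κ) (hderiv κ))
    (fun κ => hasDerivAt_putPriceDeriv (hω κ) (hderiv κ) (hderiv2 κ)) fun κ => ?_
  have hP' : 0 ≤ putPriceDeriv ω ω' κ := mul_nonneg (exp_pos κ).le (hvert κ)
  have hξ : 0 ≤ correctionMultiplier κ (ω κ) (ω' κ) (ω'' κ) := hbfly κ
  have := stdNormalPDF_pos (pivotPlus ω κ)
  have := hpos κ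
  positivity
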